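/- arXiv:2406.05037 — 5 statements merged into one kernel-verified Lean document; each statement's English description precedes it below -/
import Mathlib

section
/- Let a, c̃, ĉ ∈ ℂ and b̃ ∈ ℂ with Re(a) > 0, Re(b̃) > 0, Re(c) < 0, Re(ĉ) < 0, and suppose the Benjamin-Feir-Newell condition Im(a)Im(ĉ) + Re(a)Re(ĉ) < 0 holds. Define q̂ := −Im(ĉ)/Re(ĉ), κ_S² := [2·(Re(b̃)/Re(c))·(Im(a)Im(ĉ) + Re(a)Re(ĉ))] / [4Re(a)²(1 + q̂²) + 2·(Re(a)/Re(c))·(Im(a)Im(ĉ) + Re(a)Re(ĉ))], and κ_E² := Re(b̃)/Re(a). Then 0 < κ_S² < κ_E². -/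
theorem eckhaus_band_nonempty_proper (a b c chat : ℂ)
    (ha : 0 < a.re) (hb : 0 < b.re) (hc : c.re < 0) (hchat : chat.re < 0)
    (hBFN : a.im * chat.im + a.re * chat.re < 0)
    (qh κS2 κE2 : ℝ)
    (hq : qh = -chat.im / chat.re)
    (hS : κS2 = (2 * (b.re / c.re) * (a.im * chat.im + a.re * chat.re)) /
        (4 * a.re ^ 2 * (1 + qh ^ 2) +
          2 * (a.re / c.re) * (a.im * chat.im + a.re * chat.re)))
    (hE : κE2 = b.re / a.re) :
    0 < κS2 ∧ κS2 < κE2 := by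
  set X := a.im * chat.im + a.re * chat.re with hX
  have hXc : 0 < X / c.re := div_pos_of_neg_of_neg hBFN hc
  have hN : 0 < 2 * (b.re / c.re) * X := by
    have h := mul_pos hb hXc
    have e : 2 * (b.re / c.re) * X = 2 * (b.re * (X / c.re)) := by ring
    linarith
  have hD : 0 < 4 * a.re ^ 2 * (1 + qh ^ 2) + 2 * (a.re / c.re) * X := by
    have h1 : 0 < 4 * a.re ^ 2 * (1 + qh ^ 2) := by positivity
    have h2 : 0 < a.re * (X / c.re) := mul_pos ha hXc
    have e : 2 * (a.re / c.re) * X = 2 * (a.re * (X / c.re)) := by ring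
    linarith
  constructor
  · rw [hS]; exact div_pos hN hD
  · rw [hS, hE, div_lt_div_iff₀ hD ha]
    have h1 : 0 < 4 * a.re ^ 2 * (1 + qh ^ 2) * b.re := by positivity
    have e : b.re * (4 * a.re ^ 2 * (1 + qh ^ 2) + 2 * (a.re / c.re) * X)
        = 2 * (b.re / c.re) * X * a.re + 4 * a.re ^ 2 * (1 + qh ^ 2) * b.re := by ring
    linarith
end

section
/- Let a ∈ ℂ with Re(a) > 0, A₀ > 0, c ∈ ℂ with Re(c) < 0, d ∈ ℂ, and σ, κ ∈ ℝ. Then the 2×2 complex matrix m(σ) := −σ²·[[Re(a), −Im(a)],[Im(a), Re(a)]] + 2iκσ·[[−Im(a), −Re(a)],[Re(a), −Im(a)]] + [[2A₀²Re(c), 0],[2A₀²Im(c), 0]] has determinant, after subtracting λ·Id with λ = iα σ + O(σ²), whose order-zero coefficient in σ (after factoring iσ from the second column) equals det [[2A₀²Re(c), −2κRe(a)],[2A₀²Im(c), −2κIm(a) − α]]; setting this to zero yields α = −2κIm(a) + 2κRe(a)·Im(c)/Re(c). -/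
open Complex Matrix

theorem alpha_t_matched_cgl (a c d : ℂ) (A₀ κ alpha : ℝ)
    (ha : 0 < a.re) (hA : 0 < A₀) (hc : c.re < 0)
    (m : ℝ → Matrix (Fin 2) (Fin 2) ℂ)
    (hm : ∀ σ : ℝ, m σ =
      (-(σ : ℂ) ^ 2) • !![(a.re : ℂ), (-a.im : ℂ); (a.im : ℂ), (a.re : ℂ)] +
        (2 * I * (κ : ℂ) * (σ : ℂ)) •
          !![(-a.im : ℂ), (-a.re : ℂ); (a.re : ℂ), (-a.im : ℂ)] +
        !![((2 * A₀ ^ 2 * c.re : ℝ) : ℂ), 0; ((2 * A₀ ^ 2 * c.im : ℝ) : ℂ), 0])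
    (P0 : Matrix (Fin 2) (Fin 2) ℂ)
    (hP0 : P0 = !![((2 * A₀ ^ 2 * c.re : ℝ) : ℂ), ((-2 * κ * a.re : ℝ) : ℂ);
        ((2 * A₀ ^ 2 * c.im : ℝ) : ℂ), ((-2 * κ * a.im - alpha : ℝ) : ℂ)]) :
    (∃ E : ℝ → ℂ, Continuous E ∧ ∀ σ : ℝ,
        ((m σ) - (I * (alpha : ℂ) * (σ : ℂ)) • (1 : Matrix (Fin 2) (Fin 2) ℂ)).det =
          I * (σ : ℂ) * (P0.det + (σ : ℂ) * E σ)) ∧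
      (P0.det = 0 → alpha = -2 * κ * a.im + 2 * κ * a.re * c.im / c.re) := by
  constructor
  · refine ⟨fun σ => -I * (σ : ℂ) ^ 2 * ((a.re : ℂ) ^ 2 + (a.im : ℂ) ^ 2)
      + 2 * (σ : ℂ) * (a.re : ℂ) * (alpha : ℂ)
      + I * ((2 * (κ : ℂ) * (a.im : ℂ) + (alpha : ℂ)) ^ 2
          + 4 * (κ : ℂ) ^ 2 * (a.re : ℂ) ^ 2
          + ((2 * A₀ ^ 2 * c.re : ℝ) : ℂ) * (a.re : ℂ)
          + ((2 * A₀ ^ 2 * c.im : ℝ) : ℂ) * (a.im : ℂ)), ?_, ?_⟩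
    · fun_prop
    · intro σ
      simp [hm σ, hP0, Matrix.det_fin_two, Matrix.one_apply]
      push_cast
      ring_nf
      rw [Complex.I_sq]
      ring
  · intro h
    rw [hP0, Matrix.det_fin_two_of] at h
    have h2 : (2 * A₀ ^ 2 * c.re * (-2 * κ * a.im - alpha)
        - (-2 * κ * a.re) * (2 * A₀ ^ 2 * c.im) : ℝ) = 0 := by exact_mod_cast h
    have hA2 : (2 * A₀ ^ 2 : ℝ) ≠ 0 := by positivity
    have h4 : (2 * A₀ ^ 2) * (c.re * (-2 * κ * a.im - alpha) + 2 * κ * a.re * c.im) = 0 := by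
      linear_combination h2
    have h3 := (mul_eq_zero.mp h4).resolve_left hA2
    have hcre : c.re ≠ 0 := hc.ne
    field_simp
    linarith [h3]
end

section
/- Let A₀ > 0, c ∈ ℂ with Re(c) ≠ 0, f, h ∈ ℝ with f ≠ 0, d ∈ ℂ with h·Re(d) ≠ 0, and set ĉ := c − dh/f with Re(ĉ) ≠ 0. Then for every real σ̌ ≠ 0, the quadratic q(λ) = λ² − (2A₀²Re(c) + ifσ̌)λ + 2A₀²ifσ̌·Re(ĉ) has no purely imaginary root λ = iτ with τ ∈ ℝ. -/
open Complex

theorem quadratic_at_I_mul_eq_zero_iff (a p e s τ : ℝ) :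
    (I * τ) ^ 2 - ((a * p : ℝ) + I * s) * (I * τ) + a * I * s * e = 0 ↔
      τ * (s - τ) = 0 ∧ a * (s * e - p * τ) = 0 := by
  rw [Complex.ext_iff]
  simp only [pow_two, Complex.mul_re, Complex.mul_im, Complex.add_re, Complex.add_im,
    Complex.sub_re, Complex.sub_im, Complex.I_re, Complex.I_im, Complex.ofReal_re,
    Complex.ofReal_im, Complex.zero_re, Complex.zero_im]
  constructor <;> rintro ⟨hre, him⟩ <;> constructor <;> linarith

theorem quadratic_ne_zero_at_I_mul {a p e s : ℝ} (ha : a ≠ 0) (hs : s ≠ 0) (he : e ≠ 0)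
    (hep : e ≠ p) (τ : ℝ) :
    (I * τ) ^ 2 - ((a * p : ℝ) + I * s) * (I * τ) + a * I * s * e ≠ 0 := by
  rw [Ne, quadratic_at_I_mul_eq_zero_iff]
  rintro ⟨hreal, himag⟩
  have hlin : s * e - p * τ = 0 := (mul_eq_zero.mp himag).resolve_left ha
  rcases mul_eq_zero.mp hreal with hτ | hτ
  · subst hτ
    exact mul_ne_zero hs he (by linarith)
  · have hτs : τ = s := by linarith
    subst hτs
    exact mul_ne_zero hs (sub_ne_zero.mpr hep) (by linarith)

theorem re_sub_mul_div_ofReal_ne_re (c d : ℂ) {f h : ℝ} (hf : f ≠ 0) (hhd : h * d.re ≠ 0) :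
    (c - d * ((h : ℂ) / (f : ℂ))).re ≠ c.re := by
  rw [← ofReal_div, sub_re, re_mul_ofReal, Ne, sub_eq_self]
  exact mul_ne_zero (right_ne_zero_of_mul hhd) (div_ne_zero (left_ne_zero_of_mul hhd) hf)

theorem no_imaginary_roots_region_ii_general (c d : ℂ) (A₀ f h : ℝ)
    (hA : 0 < A₀) (hf : f ≠ 0)
    (hhd : h * d.re ≠ 0)
    (hchat : (c - d * ((h : ℂ) / (f : ℂ))).re ≠ 0) :
    ∀ σ τ : ℝ, σ ≠ 0 →
      (I * (τ : ℂ)) ^ 2 -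
          ((2 * A₀ ^ 2 * c.re : ℝ) + I * (f : ℂ) * (σ : ℂ)) * (I * (τ : ℂ)) +
          2 * (A₀ : ℂ) ^ 2 * I * (f : ℂ) * (σ : ℂ) *
            (((c - d * ((h : ℂ) / (f : ℂ))).re : ℝ) : ℂ) ≠ 0 := by
  intro σ τ hσ
  have hroot := quadratic_ne_zero_at_I_mul (by positivity : 2 * A₀ ^ 2 ≠ 0)
    (mul_ne_zero hf hσ) hchat (re_sub_mul_div_ofReal_ne_re c d hf hhd) τ
  convert hroot using 2 <;> push_cast <;> ring

theorem no_imaginary_roots_region_ii (c d : ℂ) (A₀ f h : ℝ)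
    (hA : 0 < A₀) (hc : c.re ≠ 0) (hf : f ≠ 0)
    (hhd : h * d.re ≠ 0)
    (hchat : (c - d * ((h : ℂ) / (f : ℂ))).re ≠ 0) :
    ∀ σ τ : ℝ, σ ≠ 0 →
      (I * (τ : ℂ)) ^ 2 -
          ((2 * A₀ ^ 2 * c.re : ℝ) + I * (f : ℂ) * (σ : ℂ)) * (I * (τ : ℂ)) +
          2 * (A₀ : ℂ) ^ 2 * I * (f : ℂ) * (σ : ℂ) *
            (((c - d * ((h : ℂ) / (f : ℂ))).re : ℝ) : ℂ) ≠ 0 :=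
  no_imaginary_roots_region_ii_general c d A₀ f h hA hf hhd hchat
end

section
/- Let f be an m×m real diagonal matrix with distinct diagonal entries f₁,…,f_m, let h ∈ ℝ^m and d ∈ ℂ^m with h_j·Re(d_j) ≠ 0 for all j, let c ∈ ℂ with Re(c) ≠ 0, and suppose det f ≠ 0 and Re(c)·det f − Re(d)ᵀ·adj(f)·h ≠ 0 (equivalently, Re(c)·det(f − h Re(d)ᵀ/Re(c)) ≠ 0). Then for every real σ̌ ≠ 0, every real τ and every A₀ > 0, the (m+1)×(m+1) matrix [[2A₀²Re(c) − iτ, A₀Re(d)ᵀ],[2A₀hσ̌, fσ̌ − τ·Id_m]] has nonzero determinant. -/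
open Complex Matrix Polynomial

lemma det_bordered_aux {K : Type*} [Field K] {m : ℕ} (a : K) (b c e : Fin m → K)
    (he : ∀ k, e k ≠ 0) :
    (Matrix.fromBlocks (Matrix.of fun (_ : Fin 1) (_ : Fin 1) => a)
      (Matrix.of fun (_ : Fin 1) j => b j) (Matrix.of fun i (_ : Fin 1) => c i)
      (Matrix.diagonal e)).det
    = a * ∏ k, e k - ∑ j, b j * c j * ∏ k ∈ Finset.univ.erase j, e k := by
  have hdet : IsUnit (Matrix.diagonal e).det := by
    rw [Matrix.det_diagonal]
    exact (Finset.prod_ne_zero_iff.2 fun k _ => he k).isUnit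
  haveI := Matrix.invertibleOfIsUnitDet _ hdet
  rw [Matrix.det_fromBlocks₂₂]
  rw [Matrix.det_diagonal, Matrix.det_unique]
  have hinv : (Matrix.diagonal e)⁻¹ = Matrix.diagonal (fun k => (e k)⁻¹) := by
    apply Matrix.inv_eq_right_inv
    rw [Matrix.diagonal_mul_diagonal]
    rw [show (fun i => e i * (e i)⁻¹) = fun _ => (1:K) from funext fun i => mul_inv_cancel₀ (he i)]
    exact Matrix.diagonal_one
  rw [Matrix.invOf_eq_nonsing_inv, hinv]
  have hentry : (Matrix.of (fun (_ : Fin 1) j => b j) * Matrix.diagonal (fun k => (e k)⁻¹) *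
      Matrix.of (fun i (_ : Fin 1) => c i)) default default
      = ∑ j, b j * (e j)⁻¹ * c j := by
    simp [Matrix.mul_apply, Matrix.diagonal_apply]
  rw [Matrix.sub_apply, hentry]
  simp only [Matrix.of_apply]
  rw [mul_sub, Finset.mul_sum]
  rw [mul_comm]
  congr 1
  apply Finset.sum_congr rfl
  intro j _
  rw [← Finset.mul_prod_erase Finset.univ e (Finset.mem_univ j)]
  field_simp [he j]

lemma det_bordered {K : Type*} [Field K] [Infinite K] {m : ℕ} (a : K) (b c e : Fin m → K) :
    (Matrix.fromBlocks (Matrix.of fun (_ : Fin 1) (_ : Fin 1) => a)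
      (Matrix.of fun (_ : Fin 1) j => b j) (Matrix.of fun i (_ : Fin 1) => c i)
      (Matrix.diagonal e)).det
    = a * ∏ k, e k - ∑ j, b j * c j * ∏ k ∈ Finset.univ.erase j, e k := by
  set E : Fin m → K[X] := fun k => C (e k) + X with hE
  set P : K[X] := (Matrix.fromBlocks (Matrix.of fun (_ : Fin 1) (_ : Fin 1) => C a)
      (Matrix.of fun (_ : Fin 1) j => C (b j)) (Matrix.of fun i (_ : Fin 1) => C (c i))
      (Matrix.diagonal E)).det with hP
  set Q : K[X] := C a * ∏ k, E k - ∑ j, C (b j) * C (c j) * ∏ k ∈ Finset.univ.erase j, E k with hQ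
  have key : ∀ t : K, (∀ k, e k + t ≠ 0) → eval t P = eval t Q := by
    intro t ht
    have h1 : eval t P = (Matrix.fromBlocks (Matrix.of fun (_ : Fin 1) (_ : Fin 1) => a)
        (Matrix.of fun (_ : Fin 1) j => b j) (Matrix.of fun i (_ : Fin 1) => c i)
        (Matrix.diagonal (fun k => e k + t))).det := by
      rw [hP, ← coe_evalRingHom, RingHom.map_det]
      congr 1
      rw [RingHom.mapMatrix_apply]
      ext (i|i) (j|j) <;>
        simp [hE, Matrix.map_apply, Matrix.diagonal_apply, apply_ite (eval t)]
    have h2 : eval t Q = a * ∏ k, (e k + t) -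
        ∑ j, b j * c j * ∏ k ∈ Finset.univ.erase j, (e k + t) := by
      rw [hQ]
      simp [hE, eval_prod, eval_finset_sum]
    rw [h1, h2, det_bordered_aux a b c _ ht]
  have hPQ : P = Q := by
    apply eq_of_infinite_eval_eq
    have hfin : Set.Finite {t : K | ¬ (∀ k, e k + t ≠ 0)} := by
      apply Set.Finite.subset (Set.finite_range (fun k : Fin m => - e k))
      intro t ht
      simp only [Set.mem_setOf_eq, not_forall, not_ne_iff] at ht
      obtain ⟨k, hk⟩ := ht
      exact ⟨k, by linear_combination -hk⟩
    apply Set.Infinite.mono (s := {t : K | ∀ k, e k + t ≠ 0})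
    · intro t ht; exact key t ht
    · have h3 : {t : K | ∀ k, e k + t ≠ 0} = {t : K | ¬ (∀ k, e k + t ≠ 0)}ᶜ := by
        ext t; simp
      rw [h3]; exact hfin.infinite_compl
  have := congrArg (eval 0) hPQ
  have h1 : eval 0 P = (Matrix.fromBlocks (Matrix.of fun (_ : Fin 1) (_ : Fin 1) => a)
      (Matrix.of fun (_ : Fin 1) j => b j) (Matrix.of fun i (_ : Fin 1) => c i)
      (Matrix.diagonal e)).det := by
    rw [hP, ← coe_evalRingHom, RingHom.map_det]
    congr 1
    rw [RingHom.mapMatrix_apply]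
    ext (i|i) (j|j) <;>
      simp [hE, Matrix.map_apply, Matrix.diagonal_apply, apply_ite (eval (0:K))]
  have h2 : eval 0 Q = a * ∏ k, e k - ∑ j, b j * c j * ∏ k ∈ Finset.univ.erase j, e k := by
    rw [hQ]; simp [hE, eval_prod, eval_finset_sum]
  rw [h1, h2] at this
  exact this

theorem transfer_lemma_vector (m : ℕ) (fv : Fin m → ℝ) (hfv : Function.Injective fv)
    (h : Fin m → ℝ) (d : Fin m → ℂ) (hcoup : ∀ j, h j * (d j).re ≠ 0)
    (c : ℂ) (hcre : c.re ≠ 0)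
    (hdetf : (Matrix.diagonal fv).det ≠ 0)
    (hnd : (Matrix.diagonal fv - Matrix.of fun i j => h i * (d j).re / c.re).det ≠ 0)
    (A₀ : ℝ) (hA : 0 < A₀) :
    ∀ σ τ : ℝ, σ ≠ 0 →
      (Matrix.fromBlocks
        (Matrix.of fun (_ : Fin 1) (_ : Fin 1) => ((2 * A₀ ^ 2 * c.re : ℝ) : ℂ) - I * (τ : ℂ))
        (Matrix.of fun (_ : Fin 1) (j : Fin m) => ((A₀ * (d j).re : ℝ) : ℂ))
        (Matrix.of fun (i : Fin m) (_ : Fin 1) => ((2 * A₀ * h i * σ : ℝ) : ℂ))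
        ((σ : ℂ) • ((Matrix.diagonal fv).map (fun x : ℝ => (x : ℂ))) -
          (τ : ℂ) • (1 : Matrix (Fin m) (Fin m) ℂ))).det ≠ 0 := by
  intro σ τ hσ
  have hA0 : A₀ ≠ 0 := ne_of_gt hA
  -- the bottom-right block is a diagonal matrix with real entries
  have hD : (σ : ℂ) • ((Matrix.diagonal fv).map (fun x : ℝ => (x : ℂ))) -
      (τ : ℂ) • (1 : Matrix (Fin m) (Fin m) ℂ)
      = Matrix.diagonal (fun k => ((σ * fv k - τ : ℝ) : ℂ)) := by
    ext i j
    by_cases hij : i = j <;>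
      simp [hij, Matrix.diagonal_apply, Matrix.one_apply, Matrix.map_apply]
  rw [hD, det_bordered]
  set Pr : ℝ := ∏ k, (σ * fv k - τ) with hPrdef
  set S : ℝ := ∑ j, (A₀ * (d j).re) * (2 * A₀ * h j * σ) * ∏ k ∈ Finset.univ.erase j,
      (σ * fv k - τ) with hSdef
  have hval : (((2 * A₀ ^ 2 * c.re : ℝ) : ℂ) - I * (τ : ℂ)) * ∏ k, ((σ * fv k - τ : ℝ) : ℂ) -
      ∑ j, ((A₀ * (d j).re : ℝ) : ℂ) * ((2 * A₀ * h j * σ : ℝ) : ℂ) *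
        ∏ k ∈ Finset.univ.erase j, ((σ * fv k - τ : ℝ) : ℂ)
      = ((2 * A₀ ^ 2 * c.re * Pr - S : ℝ) : ℂ) - I * ((τ * Pr : ℝ) : ℂ) := by
    simp only [hPrdef, hSdef]
    push_cast
    ring
  rw [hval]
  intro heq
  rw [Complex.ext_iff] at heq
  simp only [Complex.sub_re, Complex.sub_im, Complex.ofReal_re, Complex.ofReal_im,
    Complex.mul_re, Complex.mul_im, Complex.I_re, Complex.I_im, Complex.zero_re,
    Complex.zero_im] at heq
  obtain ⟨h1, h2⟩ := heq
  -- h1 : real part zero, h2 : imaginary part zero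
  have hre : 2 * A₀ ^ 2 * c.re * Pr - S = 0 := by linarith [h1]
  have him : τ * Pr = 0 := by linarith [h2]
  by_cases hP : Pr = 0
  · -- some diagonal entry vanishes; it is unique, and the coupling term survives
    rw [hPrdef, Finset.prod_eq_zero_iff] at hP
    obtain ⟨k, -, hk⟩ := hP
    have huniq : ∀ l, l ≠ k → σ * fv l - τ ≠ 0 := by
      intro l hl hcon
      apply hl
      apply hfv
      have : σ * fv l = σ * fv k := by linarith
      exact mul_left_cancel₀ hσ this
    have hS : S = (2 * A₀ ^ 2 * σ * (h k * (d k).re)) * ∏ l ∈ Finset.univ.erase k,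
        (σ * fv l - τ) := by
      rw [hSdef]
      rw [Finset.sum_eq_single k]
      · ring
      · intro j _ hj
        rw [Finset.prod_eq_zero (Finset.mem_erase.2 ⟨fun hc => hj hc.symm, Finset.mem_univ k⟩) hk]
        ring
      · intro hcon; exact absurd (Finset.mem_univ k) hcon
    have hSne : S ≠ 0 := by
      rw [hS]
      apply mul_ne_zero
      · apply mul_ne_zero
        · apply mul_ne_zero
          · positivity
          · exact hσ
        · exact hcoup k
      · exact Finset.prod_ne_zero_iff.2 fun l hl => huniq l (Finset.mem_erase.1 hl).1
    have : Pr = 0 := by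
      rw [hPrdef]
      exact Finset.prod_eq_zero (Finset.mem_univ k) hk
    rw [this] at hre
    apply hSne
    linarith
  · -- Pr ≠ 0, hence τ = 0, and the Darcy nondegeneracy gives a contradiction
    have hτ : τ = 0 := by
      rcases mul_eq_zero.1 him with h' | h'
      · exact h'
      · exact absurd h' hP
    subst hτ
    -- rewrite hnd as a scalar nondegeneracy
    have hprodf : (∏ k, fv k) ≠ 0 := by
      rwa [Matrix.det_diagonal] at hdetf
    have hndscalar : (∏ k, fv k) - ∑ j, ((d j).re / c.re) * h j *
        ∏ k ∈ Finset.univ.erase j, fv k ≠ 0 := by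
      have hCB : (Matrix.of fun (i : Fin m) (_ : Fin 1) => h i) *
          (Matrix.of fun (_ : Fin 1) (j : Fin m) => (d j).re / c.re)
          = Matrix.of fun i j => h i * (d j).re / c.re := by
        ext i j
        simp [Matrix.mul_apply]
        ring
      have := Matrix.det_fromBlocks_one₁₁
        (Matrix.of fun (_ : Fin 1) (j : Fin m) => (d j).re / c.re)
        (Matrix.of fun (i : Fin m) (_ : Fin 1) => h i) (Matrix.diagonal fv)
      rw [hCB] at this
      have hone : (1 : Matrix (Fin 1) (Fin 1) ℝ) =
          Matrix.of fun (_ : Fin 1) (_ : Fin 1) => (1 : ℝ) := by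
        ext i j
        simp [Matrix.one_apply, Subsingleton.elim i j]
      rw [hone, det_bordered] at this
      rw [← this] at hnd
      simpa using hnd
    -- compute Pr and S with τ = 0
    have hPr : Pr = σ ^ m * ∏ k, fv k := by
      rw [hPrdef]
      simp only [sub_zero]
      rw [Finset.prod_mul_distrib, Finset.prod_const, Finset.card_univ, Fintype.card_fin]
    have hSv : S = σ ^ m * (2 * A₀ ^ 2) * ∑ j, h j * (d j).re *
        ∏ k ∈ Finset.univ.erase j, fv k := by
      rw [hSdef, Finset.mul_sum]
      apply Finset.sum_congr rfl
      intro j _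
      simp only [sub_zero]
      rw [Finset.prod_mul_distrib, Finset.prod_const, Finset.card_erase_of_mem (Finset.mem_univ j),
        Finset.card_univ, Fintype.card_fin]
      have hm : m - 1 + 1 = m := Nat.succ_pred_eq_of_pos j.pos
      have hpow : σ ^ (m - 1) * σ = σ ^ m := by
        rw [← pow_succ, hm]
      rw [← hpow]
      ring
    rw [hPr, hSv] at hre
    have hσm : σ ^ m ≠ 0 := pow_ne_zero m hσ
    have hfac : σ ^ m * (2 * A₀ ^ 2) *
        (c.re * ∏ k, fv k - ∑ j, h j * (d j).re * ∏ k ∈ Finset.univ.erase j, fv k) = 0 := by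
      linear_combination hre
    have hne : σ ^ m * (2 * A₀ ^ 2) ≠ 0 := by
      apply mul_ne_zero hσm
      positivity
    have hkey : c.re * ∏ k, fv k - ∑ j, h j * (d j).re * ∏ k ∈ Finset.univ.erase j, fv k = 0 :=
      (mul_eq_zero.1 hfac).resolve_left hne
    apply hndscalar
    have hsum : ∑ j, ((d j).re / c.re) * h j * ∏ k ∈ Finset.univ.erase j, fv k
        = (∑ j, h j * (d j).re * ∏ k ∈ Finset.univ.erase j, fv k) / c.re := by
      rw [Finset.sum_div]
      apply Finset.sum_congr rfl
      intro j _
      ring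
    rw [hsum]
    field_simp
    linear_combination hkey
end

section
/- Let a, b̃ ∈ ℂ, c, ĉ ∈ ℂ, with Re(a) > 0, Re(b̃) > 0, Re(c) < Re(ĉ) < 0, and Im(a)Im(ĉ) + Re(a)Re(ĉ) < 0 (Benjamin-Feir-Newell). Define q̂ := −Im(ĉ)/Re(ĉ), κ_S² := [2(Re(b̃)/Re(c))(Im(a)Im(ĉ)+Re(a)Re(ĉ))]/[4Re(a)²(1+q̂²) + 2(Re(a)/Re(c))(Im(a)Im(ĉ)+Re(a)Re(ĉ))] and κ̃_S² := [2(Re(b̃)/Re(ĉ))(Im(a)Im(ĉ)+Re(a)Re(ĉ))]/[4Re(a)²(1+q̂²) + 2(Re(a)/Re(ĉ))(Im(a)Im(ĉ)+Re(a)Re(ĉ))]. Then κ_S² ≤ κ̃_S². -/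
theorem eckhaus_full_vs_frequency_adapted_darcy (a b c chat : ℂ)
    (ha : 0 < a.re) (hb : 0 < b.re) (h1 : c.re < chat.re) (h2 : chat.re < 0)
    (hBFN : a.im * chat.im + a.re * chat.re < 0)
    (qh κS2 κtS2 : ℝ)
    (hq : qh = -chat.im / chat.re)
    (hS : κS2 = (2 * (b.re / c.re) * (a.im * chat.im + a.re * chat.re)) /
        (4 * a.re ^ 2 * (1 + qh ^ 2) +
          2 * (a.re / c.re) * (a.im * chat.im + a.re * chat.re)))
    (hT : κtS2 = (2 * (b.re / chat.re) * (a.im * chat.im + a.re * chat.re)) /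
        (4 * a.re ^ 2 * (1 + qh ^ 2) +
          2 * (a.re / chat.re) * (a.im * chat.im + a.re * chat.re))) :
    κS2 ≤ κtS2 := by
  subst hq hS hT
  set M : ℝ := a.im * chat.im + a.re * chat.re with hM
  set A : ℝ := 4 * a.re ^ 2 * (1 + (-chat.im / chat.re) ^ 2) with hA
  have hc : c.re < 0 := h1.trans h2
  have hApos : 0 < A := by positivity
  have h1c : a.re / c.re < 0 := div_neg_of_pos_of_neg ha hc
  have h1ch : a.re / chat.re < 0 := div_neg_of_pos_of_neg ha h2
  have hD1 : 0 < A + 2 * (a.re / c.re) * M := by nlinarith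
  have hD2 : 0 < A + 2 * (a.re / chat.re) * M := by nlinarith
  rw [div_le_div_iff₀ hD1 hD2]
  have hcne : c.re ≠ 0 := ne_of_lt hc
  have hchne : chat.re ≠ 0 := ne_of_lt h2
  have hbc : b.re / chat.re ≤ b.re / c.re := by
    have h3 : (1:ℝ) / chat.re ≤ 1 / c.re :=
      one_div_le_one_div_of_neg_of_le h2 h1.le
    have := mul_le_mul_of_nonneg_left h3 hb.le
    simpa [div_eq_mul_inv, one_div, mul_comm] using this
  have hprod : (b.re / c.re) * (a.re / chat.re) = (b.re / chat.re) * (a.re / c.re) := by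
    field_simp
  have hprod2 : M ^ 2 * ((b.re / c.re) * (a.re / chat.re)) =
      M ^ 2 * ((b.re / chat.re) * (a.re / c.re)) := by rw [hprod]
  nlinarith [mul_nonneg (sub_nonneg.mpr hbc) (mul_nonneg (by linarith : (0:ℝ) ≤ -M) hApos.le), hprod2]
end
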